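/- An infinite stream t over {S,P} rewrites (by the rules SP → ε and PS → ε, via a strongly convergent reduction) to S^ω if and only if the upper S-height sup_n sum(t,n) equals +∞. -/

import Mathlib

/-- Infinite terms over the unary signature {S, P}, identified with streams
over {S,P}; `true` represents `S` and `false` represents `P`. -/
def SPStream : Type := ℕ → Bool

/-- A rewrite step at position `i`: the adjacent pair `S P` or `P S` starting
at position `i` is deleted (rules `P (S x) → x` and `S (P x) → x`). -/
def stepAt (i : ℕ) (t t' : SPStream) : Prop :=
  t i ≠ t (i + 1) ∧ ∀ n, t' n = if n < i then t n else t (n + 2)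

/-- A rewrite step (at any position). -/
def stepSP (t t' : SPStream) : Prop := ∃ i, stepAt i t t'

/-- A rewrite step at depth at least `d`. -/
def stepGe (d : ℕ) (t t' : SPStream) : Prop := ∃ i, d ≤ i ∧ stepAt i t t'

/-- `sconvTo t s`: there is a strongly convergent reduction of length `≤ ω`
from `t` to `s`: a sequence of stages `g n`, starting at `t`, where from stage
`n` on all contracted redexes are at depth `≥ n` (so depths tend to infinity),
and stage `n` already agrees with the limit `s` below depth `n`. -/
def sconvTo (t s : SPStream) : Prop :=
  ∃ g : ℕ → SPStream, g 0 = t ∧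
    (∀ n, Relation.ReflTransGen (stepGe n) (g n) (g (n + 1))) ∧
    (∀ n k, k < n → g n k = s k)

/-- `S^ω`, the stream of all `S`'s. -/
def Somega : SPStream := fun _ => true

/-- `P^ω`, the stream of all `P`'s. -/
def Pomega : SPStream := fun _ => false

/-- `psum t n`: number of `S`'s minus number of `P`'s among the
first `n` letters of `t`. -/
def psum (t : SPStream) : ℕ → ℤ
  | 0 => 0
  | n + 1 => psum t n + (if t n then 1 else -1)

/-!
Deleting a redex at position `i` deletes the two partial sums at `i + 1` and `i + 2`, and the
latter equals the one at `i`. Hence every partial sum of a reduct is a partial sum of the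
original stream, and a reduct is unbounded above whenever the original is.

If `t` reduces to `S^ω`, some reduct starts with `S^n`, so `n` is a partial sum of `t` for
every `n`. Conversely, if `t` is unbounded and the current stage starts with `S^n`, some later
partial sum exceeds the one at `n`; as long as the letter at `n` is `P`, the segment up to that
point cannot be all `P`s and so contains a redex, whose removal shortens it. This produces an
`S` at `n` by steps at depth `≥ n`, and iterating gives the reduction.
-/

open Set Relation

theorem exists_seq_of_forall_exists {α : Type*} {P : ℕ → α → Prop} {R : ℕ → α → α → Prop}
    {a : α} (ha : P 0 a) (h : ∀ n x, P n x → ∃ y, R n x y ∧ P (n + 1) y) :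
    ∃ g : ℕ → α, g 0 = a ∧ ∀ n, P n (g n) ∧ R n (g n) (g (n + 1)) := by
  choose f hf using h
  let g : ∀ n, {x // P n x} := fun n => Nat.rec ⟨a, ha⟩ (fun n x => ⟨f n x x.2, (hf n x x.2).2⟩) n
  exact ⟨fun n => (g n).1, rfl, fun n => ⟨(g n).2, (hf n _ (g n).2).1⟩⟩

lemma psum_succ (t : SPStream) (n : ℕ) :
    psum t (n + 1) = psum t n + (if t n then 1 else -1) := rfl

lemma psum_le (t : SPStream) (n : ℕ) : psum t n ≤ n := by
  induction n with
  | zero => rfl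
  | succ n ih => rw [psum_succ]; split <;> push_cast <;> omega

lemma psum_eq_of_forall_lt_eq_true {t : SPStream} {n : ℕ} (h : ∀ k < n, t k = true) :
    psum t n = n := by
  induction n with
  | zero => rfl
  | succ n ih =>
    rw [psum_succ, ih fun k hk => h k (by omega), h n (by omega)]
    push_cast; rfl

lemma psum_add_le_of_forall_lt_eq_false {t : SPStream} {d N : ℕ}
    (h : ∀ k < N, t (d + k) = false) : psum t (d + N) ≤ psum t d := by
  induction N with
  | zero => rfl
  | succ N ih =>
    rw [← add_assoc, psum_succ, h N (by omega)]
    have := ih fun k hk => h k (by omega)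
    simp only [Bool.false_eq_true, if_false]
    omega

lemma psum_add_two_of_ne {t : SPStream} {i : ℕ} (h : t i ≠ t (i + 1)) :
    psum t (i + 2) = psum t i := by
  rw [psum_succ, psum_succ]
  cases hi : t i <;> cases hj : t (i + 1) <;> simp_all

namespace stepAt

variable {i : ℕ} {t t' : SPStream}

lemma psum_of_le (h : stepAt i t t') {n : ℕ} (hn : n ≤ i) : psum t' n = psum t n := by
  induction n with
  | zero => rfl
  | succ n ih =>
    have hn' : t' n = t n := by rw [h.2 n, if_pos (by omega)]
    rw [psum_succ, psum_succ, ih (by omega), hn']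

lemma psum_of_ge (h : stepAt i t t') {n : ℕ} (hn : i ≤ n) : psum t' n = psum t (n + 2) := by
  induction n, hn using Nat.le_induction with
  | base => rw [h.psum_of_le le_rfl, psum_add_two_of_ne h.1]
  | succ n hn ih =>
    have hn' : t' n = t (n + 2) := by rw [h.2 n, if_neg (by omega)]
    rw [psum_succ, ih, hn']
    rfl

lemma range_psum_subset (h : stepAt i t t') : range (psum t') ⊆ range (psum t) := by
  rintro _ ⟨n, rfl⟩
  rcases le_total n i with hn | hn
  · exact ⟨n, (h.psum_of_le hn).symm⟩
  · exact ⟨n + 2, (h.psum_of_ge hn).symm⟩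

lemma range_psum_subset_insert (h : stepAt i t t') :
    range (psum t) ⊆ insert (psum t (i + 1)) (range (psum t')) := by
  rintro _ ⟨n, rfl⟩
  rcases lt_trichotomy n (i + 1) with hn | rfl | hn
  · exact Or.inr ⟨n, h.psum_of_le (by omega)⟩
  · exact Or.inl rfl
  · exact Or.inr ⟨n - 2, by rw [h.psum_of_ge (by omega), Nat.sub_add_cancel (by omega)]⟩

end stepAt

lemma stepSP_of_stepGe {d : ℕ} {t t' : SPStream} (h : stepGe d t t') : stepSP t t' :=
  let ⟨i, _, hi⟩ := h
  ⟨i, hi⟩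

namespace stepSP

variable {t t' : SPStream}

lemma range_psum_subset (h : stepSP t t') : range (psum t') ⊆ range (psum t) :=
  let ⟨_, hi⟩ := h
  hi.range_psum_subset

lemma not_bddAbove_range_psum (h : stepSP t t') (ht : ¬BddAbove (range (psum t))) :
    ¬BddAbove (range (psum t')) := by
  obtain ⟨i, hi⟩ := h
  exact fun ht' => ht ((ht'.insert _).mono hi.range_psum_subset_insert)

lemma reflTransGen_range_psum_subset (h : ReflTransGen stepSP t t') :
    range (psum t') ⊆ range (psum t) := by
  induction h with
  | refl => rfl
  | tail _ hstep ih => exact hstep.range_psum_subset.trans ih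

lemma reflTransGen_not_bddAbove_range_psum (h : ReflTransGen stepSP t t')
    (ht : ¬BddAbove (range (psum t))) : ¬BddAbove (range (psum t')) := by
  induction h with
  | refl => exact ht
  | tail _ hstep ih => exact hstep.not_bddAbove_range_psum ih

end stepSP

lemma stepGe.reflTransGen_eq_of_lt {d : ℕ} {t t' : SPStream}
    (h : ReflTransGen (stepGe d) t t') {k : ℕ} (hk : k < d) : t' k = t k := by
  induction h with
  | refl => rfl
  | tail _ hstep ih =>
    obtain ⟨i, hdi, -, he⟩ := hstep
    rw [he k, if_pos (by omega), ih]

lemma exists_reflTransGen_stepGe_eq_true {d : ℕ} (N : ℕ) {u : SPStream}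
    (hlt : psum u d < psum u (d + N)) : ∃ u', ReflTransGen (stepGe d) u u' ∧ u' d = true := by
  induction N using Nat.strong_induction_on generalizing u with
  | _ N ih =>
  by_cases hd : u d = true
  · exact ⟨u, .refl, hd⟩
  by_cases hredex : ∃ i, d ≤ i ∧ i + 2 ≤ d + N ∧ u i ≠ u (i + 1)
  · obtain ⟨i, hdi, hiN, hne⟩ := hredex
    obtain ⟨v, hstep⟩ : ∃ v, stepAt i u v := ⟨_, hne, fun _ => rfl⟩
    have hlt' : psum v d < psum v (d + (N - 2)) := by
      rwa [hstep.psum_of_le hdi, hstep.psum_of_ge (by omega),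
        show d + (N - 2) + 2 = d + N by omega]
    obtain ⟨u', hred, hu'⟩ := ih (N - 2) (by omega) hlt'
    exact ⟨u', .head ⟨i, hdi, hstep⟩ hred, hu'⟩
  · push Not at hredex
    have hP : ∀ k < N, u (d + k) = false := by
      intro k hk
      induction k with
      | zero => simpa using hd
      | succ k ihk => rw [← add_assoc, ← hredex (d + k) (by omega) (by omega), ihk (by omega)]
    exact absurd (psum_add_le_of_forall_lt_eq_false hP) (not_le.2 hlt)

lemma exists_reflTransGen_stepGe_prefix_succ {n : ℕ} {u : SPStream}
    (hu : ¬BddAbove (range (psum u))) (hpre : ∀ k < n, u k = true) :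
    ∃ u', ReflTransGen (stepGe n) u u' ∧ ∀ k < n + 1, u' k = true := by
  obtain ⟨_, ⟨m, rfl⟩, hm⟩ := not_bddAbove_iff.1 hu (psum u n)
  have hnm : n < m := by
    have := psum_le u m
    rw [psum_eq_of_forall_lt_eq_true hpre] at hm
    omega
  obtain ⟨u', hred, hu'⟩ := exists_reflTransGen_stepGe_eq_true (m - n)
    (by rwa [Nat.add_sub_cancel' hnm.le])
  refine ⟨u', hred, fun k hk => ?_⟩
  rcases Nat.lt_succ_iff_lt_or_eq.1 hk with hk | rfl
  · rw [stepGe.reflTransGen_eq_of_lt hred hk, hpre k hk]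
  · exact hu'

lemma reflTransGen_stepSP_of_stepGe {d : ℕ} {t t' : SPStream}
    (h : ReflTransGen (stepGe d) t t') : ReflTransGen stepSP t t' :=
  ReflTransGen.mono (fun _ _ => stepSP_of_stepGe) _ _ h

lemma sconvTo.natCast_mem_range_psum {t : SPStream} (h : sconvTo t Somega) (n : ℕ) :
    (n : ℤ) ∈ range (psum t) := by
  obtain ⟨g, rfl, hred, hlim⟩ := h
  have hrange : ∀ n, range (psum (g n)) ⊆ range (psum (g 0)) := by
    intro n
    induction n with
    | zero => rfl
    | succ n ih =>
      exact (stepSP.reflTransGen_range_psum_subset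
        (reflTransGen_stepSP_of_stepGe (hred n))).trans ih
  exact hrange n ⟨n, psum_eq_of_forall_lt_eq_true (hlim n)⟩

lemma sconvTo_somega_of_not_bddAbove {t : SPStream} (ht : ¬BddAbove (range (psum t))) :
    sconvTo t Somega := by
  obtain ⟨g, hg0, hg⟩ := exists_seq_of_forall_exists
    (P := fun n u => ¬BddAbove (range (psum u)) ∧ ∀ k < n, u k = true)
    (R := fun n u u' => ReflTransGen (stepGe n) u u') ⟨ht, by simp⟩ <| by
    rintro n u ⟨hu, hpre⟩
    obtain ⟨u', hred, hpre'⟩ := exists_reflTransGen_stepGe_prefix_succ hu hpre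
    exact ⟨u', hred, stepSP.reflTransGen_not_bddAbove_range_psum
      (reflTransGen_stepSP_of_stepGe hred) hu, hpre'⟩
  exact ⟨g, hg0, fun n => (hg n).2, fun n => (hg n).1.2⟩

/-- a stream rewrites by a strongly convergent reduction to `S^ω`
iff its upper S-height `sup_n sum(t,n)` is `+∞` (i.e. the partial sums are
unbounded above). -/
theorem statement2 (t : SPStream) :
    sconvTo t Somega ↔ ∀ m : ℤ, ∃ n : ℕ, m < psum t n := by
  have hunb : (∀ m : ℤ, ∃ n : ℕ, m < psum t n) ↔ ¬BddAbove (range (psum t)) := by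
    simp [not_bddAbove_iff]
  rw [hunb]
  refine ⟨fun h => not_bddAbove_iff.2 fun m => ?_, sconvTo_somega_of_not_bddAbove⟩
  exact ⟨_, h.natCast_mem_range_psum (m.toNat + 1), by omega⟩
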